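/- arXiv:1602.02390 — 2 statements merged into one kernel-verified Lean document; each statement's English description precedes it below -/
import Mathlib

section
/- Let X, Y be random variables on a common probability space taking values in finite sets, and let M_1, …, M_n be finite-valued random variables on the same space such that for every odd i, I(M_i ; Y | (X, (M_1, …, M_{i-1}))) = 0 and for every even i, I(M_i ; X | (Y, (M_1, …, M_{i-1}))) = 0 (the Markov conditions satisfied by any interactive protocol transcript). Then I(X ; Y | (M_1, …, M_n)) ≤ I(X ; Y). -/
open MeasureTheory ProbabilityTheory Real
open scoped ENNReal

/-- The probability that the random variable `X` takes the value `x`. -/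
noncomputable def pm {Ω S : Type*} [MeasurableSpace Ω] (μ : Measure Ω) (X : Ω → S) (x : S) : ℝ :=
  (μ (X ⁻¹' {x})).toReal

/-- Shannon entropy (with natural logarithm) of a finite-valued random variable. -/
noncomputable def entH {Ω S : Type*} [MeasurableSpace Ω] [Fintype S]
    (μ : Measure Ω) (X : Ω → S) : ℝ :=
  ∑ x : S, Real.negMulLog (pm μ X x)

/-- Conditional entropy `H(X | Y)`. -/
noncomputable def condEnt {Ω S T : Type*} [MeasurableSpace Ω] [Fintype S] [Fintype T]
    (μ : Measure Ω) (X : Ω → S) (Y : Ω → T) : ℝ :=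
  entH μ (fun ω => (X ω, Y ω)) - entH μ Y

/-- Mutual information `I(X ; Y)`. -/
noncomputable def mutInf {Ω S T : Type*} [MeasurableSpace Ω] [Fintype S] [Fintype T]
    (μ : Measure Ω) (X : Ω → S) (Y : Ω → T) : ℝ :=
  entH μ X + entH μ Y - entH μ (fun ω => (X ω, Y ω))

/-- Conditional mutual information `I(X ; Y | Z)`. -/
noncomputable def condMutInf {Ω S T U : Type*} [MeasurableSpace Ω] [Fintype S] [Fintype T]
    [Fintype U] (μ : Measure Ω) (X : Ω → S) (Y : Ω → T) (Z : Ω → U) : ℝ :=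
  entH μ (fun ω => (X ω, Z ω)) + entH μ (fun ω => (Y ω, Z ω))
    - entH μ (fun ω => ((X ω, Y ω), Z ω)) - entH μ Z

set_option linter.unusedSectionVars false
set_option linter.unusedVariables false

lemma pm_nonneg {Ω S : Type*} [MeasurableSpace Ω] (μ : Measure Ω) (X : Ω → S) (x : S) :
    0 ≤ pm μ X x := ENNReal.toReal_nonneg

lemma pm_comp_inj {Ω S S' : Type*} [MeasurableSpace Ω] (μ : Measure Ω)
    {f : S → S'} (hf : Function.Injective f) (W : Ω → S) (x : S) :
    pm μ (fun ω => f (W ω)) (f x) = pm μ W x := by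
  unfold pm
  have : (fun ω => f (W ω)) ⁻¹' {f x} = W ⁻¹' {x} := by
    ext ω; simp [hf.eq_iff]
  rw [this]

lemma entH_comp_inj {Ω S S' : Type*} [MeasurableSpace Ω] (μ : Measure Ω)
    [Fintype S] [Fintype S'] {f : S → S'} (hf : Function.Injective f) (W : Ω → S) :
    entH μ (fun ω => f (W ω)) = entH μ W := by
  classical
  unfold entH
  have h2 : ∀ y : S', y ∉ Finset.univ.image f → pm μ (fun ω => f (W ω)) y = 0 := by
    intro y hy
    have : (fun ω => f (W ω)) ⁻¹' {y} = ∅ := by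
      ext ω
      simp only [Set.mem_preimage, Set.mem_singleton_iff, Set.mem_empty_iff_false, iff_false]
      intro h
      exact hy (Finset.mem_image.2 ⟨W ω, Finset.mem_univ _, h⟩)
    simp [pm, this]
  calc ∑ y : S', negMulLog (pm μ (fun ω => f (W ω)) y)
      = ∑ y ∈ Finset.univ.image f, negMulLog (pm μ (fun ω => f (W ω)) y) := by
        refine (Finset.sum_subset (Finset.subset_univ _) ?_).symm
        intro y _ hy
        rw [h2 y hy, negMulLog_zero]
    _ = ∑ x : S, negMulLog (pm μ (fun ω => f (W ω)) (f x)) :=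
        Finset.sum_image (fun x _ y _ h => hf h)
    _ = ∑ x : S, negMulLog (pm μ W x) := by
        refine Finset.sum_congr rfl fun x _ => ?_
        rw [pm_comp_inj μ hf W x]

lemma pm_eq_sum {Ω S T : Type*} [MeasurableSpace Ω] (μ : Measure Ω) [IsProbabilityMeasure μ]
    [Fintype S] [MeasurableSpace S] [MeasurableSingletonClass S]
    [MeasurableSpace T] [MeasurableSingletonClass T]
    (W : Ω → S) (V : Ω → T) (hW : Measurable W) (hV : Measurable V) (v : T) :
    pm μ V v = ∑ w : S, pm μ (fun ω => (W ω, V ω)) (w, v) := by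
  have hset : ∀ w : S, (fun ω => (W ω, V ω)) ⁻¹' {(w, v)} = W ⁻¹' {w} ∩ V ⁻¹' {v} := by
    intro w; ext ω; simp [Prod.ext_iff, And.comm]
  have hmeas : ∀ w : S, MeasurableSet (W ⁻¹' {w} ∩ V ⁻¹' {v}) := fun w =>
    (hW (measurableSet_singleton w)).inter (hV (measurableSet_singleton v))
  have hdisj : Pairwise (Function.onFun Disjoint (fun w => W ⁻¹' {w} ∩ V ⁻¹' {v})) := by
    intro w w' hww
    refine Set.disjoint_left.2 ?_
    rintro ω ⟨hw, -⟩ ⟨hw', -⟩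
    exact hww (hw.symm.trans hw')
  have hcover : V ⁻¹' {v} = ⋃ w : S, (W ⁻¹' {w} ∩ V ⁻¹' {v}) := by
    ext ω
    simp only [Set.mem_iUnion, Set.mem_inter_iff, Set.mem_preimage, Set.mem_singleton_iff]
    constructor
    · intro h; exact ⟨W ω, rfl, h⟩
    · rintro ⟨w, -, h⟩; exact h
  have hmu := measure_iUnion (μ := μ) hdisj hmeas
  unfold pm
  rw [hcover, hmu, tsum_fintype, ENNReal.toReal_sum (fun w _ => measure_ne_top μ _)]
  refine Finset.sum_congr rfl fun w _ => ?_
  rw [hset w]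

lemma key_ineq {S T U : Type*} [Fintype S] [Fintype T] [Fintype U]
    (p : S → T → U → ℝ) (hp : ∀ x y z, 0 ≤ p x y z) :
    (∑ z : U, ∑ x : S, ∑ y : T, negMulLog (p x y z)) + (∑ z : U, negMulLog (∑ x : S, ∑ y : T, p x y z))
      ≤ (∑ z : U, ∑ x : S, negMulLog (∑ y : T, p x y z))
        + (∑ z : U, ∑ y : T, negMulLog (∑ x : S, p x y z)) := by
  set a : S → U → ℝ := fun x z => ∑ y : T, p x y z with ha
  set b : T → U → ℝ := fun y z => ∑ x : S, p x y z with hb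
  set q : U → ℝ := fun z => ∑ x : S, ∑ y : T, p x y z with hq
  have ha0 : ∀ x z, 0 ≤ a x z := fun x z => Finset.sum_nonneg fun y _ => hp x y z
  have hb0 : ∀ y z, 0 ≤ b y z := fun y z => Finset.sum_nonneg fun x _ => hp x y z
  have hq0 : ∀ z, 0 ≤ q z := fun z => Finset.sum_nonneg fun x _ => ha0 x z
  have hpa : ∀ x y z, p x y z ≤ a x z := fun x y z =>
    Finset.single_le_sum (fun y' _ => hp x y' z) (Finset.mem_univ y)
  have hpb : ∀ x y z, p x y z ≤ b y z := fun x y z =>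
    Finset.single_le_sum (fun x' _ => hp x' y z) (Finset.mem_univ x)
  have haq : ∀ x z, a x z ≤ q z := fun x z =>
    Finset.single_le_sum (fun x' _ => ha0 x' z) (Finset.mem_univ x)
  -- termwise difference
  set D : S → T → U → ℝ := fun x y z =>
    (-(p x y z * log (a x z))) + (-(p x y z * log (b y z)))
      - negMulLog (p x y z) - (-(p x y z * log (q z))) with hD
  -- the four entropy-like sums as triple sums
  have e1 : ∀ z, ∀ x, negMulLog (a x z) = ∑ y : T, (-(p x y z * log (a x z))) := by
    intro z x
    rw [negMulLog, neg_mul, ha]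
    simp only [Finset.sum_mul, ← Finset.sum_neg_distrib]
  have e2 : ∀ z, ∀ y, negMulLog (b y z) = ∑ x : S, (-(p x y z * log (b y z))) := by
    intro z y
    rw [negMulLog, neg_mul, hb]
    simp only [Finset.sum_mul, ← Finset.sum_neg_distrib]
  have e4 : ∀ z, negMulLog (q z) = ∑ x : S, ∑ y : T, (-(p x y z * log (q z))) := by
    intro z
    rw [negMulLog, neg_mul, hq]
    simp only [Finset.sum_mul, ← Finset.sum_neg_distrib]
  have hEq : (∑ z : U, ∑ x : S, negMulLog (a x z)) + (∑ z : U, ∑ y : T, negMulLog (b y z))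
      - (∑ z : U, ∑ x : S, ∑ y : T, negMulLog (p x y z)) - (∑ z : U, negMulLog (q z))
      = ∑ z : U, ∑ x : S, ∑ y : T, D x y z := by
    simp only [e1, e2, e4]
    rw [← Finset.sum_add_distrib, ← Finset.sum_sub_distrib, ← Finset.sum_sub_distrib]
    refine Finset.sum_congr rfl fun z _ => ?_
    rw [Finset.sum_comm (s := Finset.univ) (t := Finset.univ)
      (f := fun y x => (-(p x y z * log (b y z))))]
    rw [← Finset.sum_add_distrib, ← Finset.sum_sub_distrib, ← Finset.sum_sub_distrib]
    refine Finset.sum_congr rfl fun x _ => ?_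
    rw [← Finset.sum_add_distrib, ← Finset.sum_sub_distrib, ← Finset.sum_sub_distrib]
  have hDlb : ∀ x y z, p x y z - a x z * b y z / q z ≤ D x y z := by
    intro x y z
    rcases eq_or_lt_of_le (hp x y z) with h0 | h0
    · have : D x y z = 0 := by simp [hD, ← h0]
      rw [this]
      have : 0 ≤ a x z * b y z / q z :=
        div_nonneg (mul_nonneg (ha0 x z) (hb0 y z)) (hq0 z)
      linarith
    · have hA : 0 < a x z := lt_of_lt_of_le h0 (hpa x y z)
      have hB : 0 < b y z := lt_of_lt_of_le h0 (hpb x y z)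
      have hQ : 0 < q z := lt_of_lt_of_le hA (haq x z)
      have hDval : D x y z = p x y z * log (p x y z * q z / (a x z * b y z)) := by
        simp only [hD, negMulLog]
        rw [Real.log_div (by positivity) (by positivity), Real.log_mul (ne_of_gt h0) (ne_of_gt hQ),
          Real.log_mul (ne_of_gt hA) (ne_of_gt hB)]
        ring
      rw [hDval]
      have ht : 0 < a x z * b y z / (p x y z * q z) := by positivity
      have hlog := Real.log_le_sub_one_of_pos ht
      have hlogeq : log (p x y z * q z / (a x z * b y z))
          = - log (a x z * b y z / (p x y z * q z)) := by
        rw [← Real.log_inv]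
        congr 1
        field_simp
      rw [hlogeq]
      have key : p x y z * (a x z * b y z / (p x y z * q z)) = a x z * b y z / q z := by
        field_simp
      nlinarith [mul_le_mul_of_nonneg_left hlog (le_of_lt h0)]
  have hsum0 : ∑ z : U, ∑ x : S, ∑ y : T, (p x y z - a x z * b y z / q z) = 0 := by
    have hz : ∀ z : U, ∑ x : S, ∑ y : T, (a x z * b y z / q z) = q z := by
      intro z
      rcases eq_or_lt_of_le (hq0 z) with h0 | h0
      · have haz : ∀ x, a x z = 0 := by
          intro x
          have := haq x z
          have := ha0 x z
          linarith [h0.symm ▸ this]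
        simp only [haz, zero_mul, zero_div, Finset.sum_const_zero]
        rw [← h0]
      · have : ∑ x : S, ∑ y : T, (a x z * b y z / q z)
            = (∑ x : S, a x z) * (∑ y : T, b y z) / q z := by
          rw [Finset.sum_mul, Finset.sum_div]
          refine Finset.sum_congr rfl fun x _ => ?_
          rw [← Finset.sum_div, ← Finset.mul_sum]
        rw [this]
        have hsa : ∑ x : S, a x z = q z := rfl
        have hsb : ∑ y : T, b y z = q z := by
          rw [hb, hq, Finset.sum_comm]
        rw [hsa, hsb]
        field_simp
      
    simp only [Finset.sum_sub_distrib]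
    have h1 : ∑ z : U, ∑ x : S, ∑ y : T, (a x z * b y z / q z) = ∑ z : U, q z :=
      Finset.sum_congr rfl fun z _ => hz z
    have h2 : ∑ z : U, ∑ x : S, ∑ y : T, p x y z = ∑ z : U, q z :=
      Finset.sum_congr rfl fun z _ => rfl
    rw [h1, h2, sub_self]
  have hfinal : 0 ≤ ∑ z : U, ∑ x : S, ∑ y : T, D x y z := by
    rw [← hsum0]
    refine Finset.sum_le_sum fun z _ => Finset.sum_le_sum fun x _ => Finset.sum_le_sum fun y _ => ?_
    exact hDlb x y z
  linarith [hEq, hfinal]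


section Main
variable {Ω : Type*} [MeasurableSpace Ω] (μ : Measure Ω) [IsProbabilityMeasure μ]

/-- Nonnegativity of conditional mutual information. -/
lemma condMutInf_nonneg {S T U : Type*} [Fintype S] [Fintype T] [Fintype U]
    [MeasurableSpace S] [MeasurableSingletonClass S]
    [MeasurableSpace T] [MeasurableSingletonClass T]
    [MeasurableSpace U] [MeasurableSingletonClass U]
    (X : Ω → S) (Y : Ω → T) (Z : Ω → U)
    (hX : Measurable X) (hY : Measurable Y) (hZ : Measurable Z) :
    0 ≤ condMutInf μ X Y Z := by
  classical
  set p : S → T → U → ℝ := fun x y z => pm μ (fun ω => ((X ω, Y ω), Z ω)) ((x, y), z) with hpdef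
  have hp : ∀ x y z, 0 ≤ p x y z := fun x y z => pm_nonneg μ _ _
  have hXZ : ∀ x z, pm μ (fun ω => (X ω, Z ω)) (x, z) = ∑ y : T, p x y z := by
    intro x z
    rw [pm_eq_sum μ Y (fun ω => (X ω, Z ω)) hY (hX.prodMk hZ) (x, z)]
    refine Finset.sum_congr rfl fun y _ => ?_
    have hinj : Function.Injective
        (fun r : (S × T) × U => (r.1.2, (r.1.1, r.2))) := by
      rintro ⟨⟨a, b⟩, c⟩ ⟨⟨a', b'⟩, c'⟩ h
      simp only [Prod.mk.injEq] at h
      simp [Prod.ext_iff, h.1, h.2.1, h.2.2]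
    have := pm_comp_inj μ hinj (fun ω => ((X ω, Y ω), Z ω)) ((x, y), z)
    simpa using this
  have hYZ : ∀ y z, pm μ (fun ω => (Y ω, Z ω)) (y, z) = ∑ x : S, p x y z := by
    intro y z
    rw [pm_eq_sum μ X (fun ω => (Y ω, Z ω)) hX (hY.prodMk hZ) (y, z)]
    refine Finset.sum_congr rfl fun x _ => ?_
    have hinj : Function.Injective
        (fun r : (S × T) × U => (r.1.1, (r.1.2, r.2))) := by
      rintro ⟨⟨a, b⟩, c⟩ ⟨⟨a', b'⟩, c'⟩ h
      simp only [Prod.mk.injEq] at h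
      simp [Prod.ext_iff, h.1, h.2.1, h.2.2]
    have := pm_comp_inj μ hinj (fun ω => ((X ω, Y ω), Z ω)) ((x, y), z)
    simpa using this
  have hZm : ∀ z, pm μ Z z = ∑ x : S, ∑ y : T, p x y z := by
    intro z
    rw [pm_eq_sum μ (fun ω => (X ω, Y ω)) Z (hX.prodMk hY) hZ z, Fintype.sum_prod_type]
  have e1 : entH μ (fun ω => (X ω, Z ω)) = ∑ z : U, ∑ x : S, negMulLog (∑ y : T, p x y z) := by
    unfold entH
    rw [Fintype.sum_prod_type, Finset.sum_comm]
    exact Finset.sum_congr rfl fun z _ => Finset.sum_congr rfl fun x _ => by rw [hXZ x z]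
  have e2 : entH μ (fun ω => (Y ω, Z ω)) = ∑ z : U, ∑ y : T, negMulLog (∑ x : S, p x y z) := by
    unfold entH
    rw [Fintype.sum_prod_type, Finset.sum_comm]
    exact Finset.sum_congr rfl fun z _ => Finset.sum_congr rfl fun y _ => by rw [hYZ y z]
  have e3 : entH μ (fun ω => ((X ω, Y ω), Z ω))
      = ∑ z : U, ∑ x : S, ∑ y : T, negMulLog (p x y z) := by
    unfold entH
    rw [Fintype.sum_prod_type, Finset.sum_comm]
    refine Finset.sum_congr rfl fun z _ => ?_
    rw [Fintype.sum_prod_type]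
  have e4 : entH μ Z = ∑ z : U, negMulLog (∑ x : S, ∑ y : T, p x y z) := by
    unfold entH
    exact Finset.sum_congr rfl fun z _ => by rw [hZm z]
  have := key_ineq p hp
  unfold condMutInf
  rw [e1, e2, e3, e4]
  linarith

/-- relabel the conditioning variable by an injection -/
lemma condMutInf_comp_inj {S T U U' : Type*} [Fintype S] [Fintype T] [Fintype U] [Fintype U']
    (X : Ω → S) (Y : Ω → T) (Z : Ω → U) {g : U → U'} (hg : Function.Injective g) :
    condMutInf μ X Y (fun ω => g (Z ω)) = condMutInf μ X Y Z := by
  unfold condMutInf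
  have hinj1 : Function.Injective (fun r : S × U => (r.1, g r.2)) := by
    rintro ⟨a, b⟩ ⟨a', b'⟩ h
    simp only [Prod.mk.injEq] at h
    simp [Prod.ext_iff, h.1, hg h.2]
  have hinj2 : Function.Injective (fun r : T × U => (r.1, g r.2)) := by
    rintro ⟨a, b⟩ ⟨a', b'⟩ h
    simp only [Prod.mk.injEq] at h
    simp [Prod.ext_iff, h.1, hg h.2]
  have hinj3 : Function.Injective (fun r : (S × T) × U => (r.1, g r.2)) := by
    rintro ⟨a, b⟩ ⟨a', b'⟩ h
    simp only [Prod.mk.injEq] at h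
    simp [Prod.ext_iff, h.1, hg h.2]
  rw [entH_comp_inj μ hinj1 (fun ω => (X ω, Z ω)),
    entH_comp_inj μ hinj2 (fun ω => (Y ω, Z ω)),
    entH_comp_inj μ hinj3 (fun ω => ((X ω, Y ω), Z ω)),
    entH_comp_inj μ hg Z]

lemma condMutInf_comp_inj' {S T U U' : Type*} [Fintype S] [Fintype T] [Fintype U] [Fintype U']
    (X : Ω → S) (Y : Ω → T) (Z : Ω → U) {g : U → U'} (hg : Function.Injective g)
    (W : Ω → U') (hW : ∀ ω, W ω = g (Z ω)) :
    condMutInf μ X Y W = condMutInf μ X Y Z := by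
  rw [show W = fun ω => g (Z ω) from funext hW]
  exact condMutInf_comp_inj μ X Y Z hg

/-- symmetry in the first two arguments -/
lemma condMutInf_comm {S T U : Type*} [Fintype S] [Fintype T] [Fintype U]
    (X : Ω → S) (Y : Ω → T) (Z : Ω → U) :
    condMutInf μ X Y Z = condMutInf μ Y X Z := by
  unfold condMutInf
  have hinj : Function.Injective (fun r : (T × S) × U => ((r.1.2, r.1.1), r.2)) := by
    rintro ⟨⟨a, b⟩, c⟩ ⟨⟨a', b'⟩, c'⟩ h
    simp only [Prod.mk.injEq] at h
    simp [Prod.ext_iff, h.1, h.2]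
  rw [← entH_comp_inj μ hinj (fun ω => ((Y ω, X ω), Z ω))]
  ring

/-- conditioning on a trivial variable gives mutual information -/
lemma condMutInf_of_unique {S T U : Type*} [Fintype S] [Fintype T] [Fintype U] [Unique U]
    (X : Ω → S) (Y : Ω → T) (Z : Ω → U) :
    condMutInf μ X Y Z = mutInf μ X Y := by
  have hZconst : ∀ ω, Z ω = default := fun ω => Subsingleton.elim _ _
  have eZ : entH μ Z = 0 := by
    unfold entH
    rw [Fintype.sum_unique]
    have : Z ⁻¹' {default} = Set.univ := by
      ext ω; simp [hZconst ω]
    rw [pm, this]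
    simp
  have eX : entH μ (fun ω => (X ω, Z ω)) = entH μ X := by
    have hpair : (fun ω => (X ω, Z ω)) = fun ω => (X ω, (default : U)) :=
      funext fun ω => by rw [hZconst ω]
    have hinj : Function.Injective (fun v : S => (v, (default : U))) :=
      fun a b h => congrArg Prod.fst h
    rw [hpair]; exact entH_comp_inj μ hinj X
  have eY : entH μ (fun ω => (Y ω, Z ω)) = entH μ Y := by
    have hpair : (fun ω => (Y ω, Z ω)) = fun ω => (Y ω, (default : U)) :=
      funext fun ω => by rw [hZconst ω]
    have hinj : Function.Injective (fun v : T => (v, (default : U))) :=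
      fun a b h => congrArg Prod.fst h
    rw [hpair]; exact entH_comp_inj μ hinj Y
  have eXY : entH μ (fun ω => ((X ω, Y ω), Z ω)) = entH μ (fun ω => (X ω, Y ω)) := by
    have hpair : (fun ω => ((X ω, Y ω), Z ω)) = fun ω => ((X ω, Y ω), (default : U)) :=
      funext fun ω => by rw [hZconst ω]
    have hinj : Function.Injective (fun v : S × T => (v, (default : U))) :=
      fun a b h => congrArg Prod.fst h
    rw [hpair]; exact entH_comp_inj μ hinj _
  unfold condMutInf mutInf
  rw [eZ, eX, eY, eXY]
  ring

/-- one step of the protocol does not increase the conditional mutual information -/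
lemma step_lemma {S T U V : Type*} [Fintype S] [Fintype T] [Fintype U] [Fintype V]
    [MeasurableSpace S] [MeasurableSingletonClass S]
    [MeasurableSpace T] [MeasurableSingletonClass T]
    [MeasurableSpace U] [MeasurableSingletonClass U]
    [MeasurableSpace V] [MeasurableSingletonClass V]
    (X : Ω → S) (Y : Ω → T) (Z : Ω → U) (W : Ω → V)
    (hX : Measurable X) (hY : Measurable Y) (hZ : Measurable Z) (hW : Measurable W)
    (h : condMutInf μ W Y (fun ω => (X ω, Z ω)) = 0) :
    condMutInf μ X Y (fun ω => (W ω, Z ω)) ≤ condMutInf μ X Y Z := by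
  have hnn : 0 ≤ condMutInf μ W Y Z := condMutInf_nonneg μ W Y Z hW hY hZ
  unfold condMutInf at h hnn ⊢
  -- relabelings
  have r1 : entH μ (fun ω => (X ω, (W ω, Z ω))) = entH μ (fun ω => (W ω, (X ω, Z ω))) := by
    have hinj : Function.Injective (fun r : S × V × U => (r.2.1, (r.1, r.2.2))) := by
      rintro ⟨a, b, c⟩ ⟨a', b', c'⟩ h
      simp only [Prod.mk.injEq] at h
      simp [Prod.ext_iff, h.1, h.2]
    exact (entH_comp_inj μ hinj (fun ω => (X ω, (W ω, Z ω)))).symm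
  have r2 : entH μ (fun ω => (Y ω, (W ω, Z ω))) = entH μ (fun ω => ((W ω, Y ω), Z ω)) := by
    have hinj : Function.Injective (fun r : T × V × U => ((r.2.1, r.1), r.2.2)) := by
      rintro ⟨a, b, c⟩ ⟨a', b', c'⟩ h
      simp only [Prod.mk.injEq] at h
      simp [Prod.ext_iff, h.1, h.2]
    exact (entH_comp_inj μ hinj (fun ω => (Y ω, (W ω, Z ω)))).symm
  have r3 : entH μ (fun ω => ((X ω, Y ω), (W ω, Z ω)))
      = entH μ (fun ω => ((W ω, Y ω), (X ω, Z ω))) := by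
    have hinj : Function.Injective (fun r : (S × T) × V × U => ((r.2.1, r.1.2), (r.1.1, r.2.2))) := by
      rintro ⟨⟨a, b⟩, c, d⟩ ⟨⟨a', b'⟩, c', d'⟩ h
      simp only [Prod.mk.injEq] at h
      simp [Prod.ext_iff, h.1, h.2]
    exact (entH_comp_inj μ hinj (fun ω => ((X ω, Y ω), (W ω, Z ω)))).symm
  have r4 : entH μ (fun ω => (Y ω, (X ω, Z ω))) = entH μ (fun ω => ((X ω, Y ω), Z ω)) := by
    have hinj : Function.Injective (fun r : T × S × U => ((r.2.1, r.1), r.2.2)) := by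
      rintro ⟨a, b, c⟩ ⟨a', b', c'⟩ h
      simp only [Prod.mk.injEq] at h
      simp [Prod.ext_iff, h.1, h.2]
    exact (entH_comp_inj μ hinj (fun ω => (Y ω, (X ω, Z ω)))).symm
  have r5 : entH μ (fun ω => (W ω, Z ω)) = entH μ (fun ω => (W ω, Z ω)) := rfl
  rw [r4] at h
  rw [r1, r2, r3]
  linarith

end Main

/-- For the transcript `(M_1, …, M_n)` of any interactive protocol on inputs `X, Y`
(messages at odd stages are generated from `X` and the past, messages at even stages from
`Y` and the past; here stage `i : Fin n` corresponds to message `i+1`, so `Even i.val`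
corresponds to an odd-numbered message), `I(X ; Y | (M_1, …, M_n)) ≤ I(X ; Y)`. -/
theorem cmi_given_transcript_le_mi
    {Ω : Type*} [MeasurableSpace Ω] (μ : Measure Ω) [IsProbabilityMeasure μ]
    {S T : Type*} [Fintype S] [Fintype T]
    [MeasurableSpace S] [MeasurableSingletonClass S]
    [MeasurableSpace T] [MeasurableSingletonClass T]
    (X : Ω → S) (Y : Ω → T) (hX : Measurable X) (hY : Measurable Y)
    {n : ℕ} (A : Fin n → Type) [∀ i, Fintype (A i)]
    [∀ i, MeasurableSpace (A i)] [∀ i, MeasurableSingletonClass (A i)]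
    (M : ∀ i, Ω → A i) (hM : ∀ i, Measurable (M i))
    (hAlice : ∀ i : Fin n, Even i.val →
      condMutInf μ (M i) Y
        (fun ω => (X ω, fun j : Fin i.val => M ⟨j.val, j.isLt.trans i.isLt⟩ ω)) = 0)
    (hBob : ∀ i : Fin n, Odd i.val →
      condMutInf μ (M i) X
        (fun ω => (Y ω, fun j : Fin i.val => M ⟨j.val, j.isLt.trans i.isLt⟩ ω)) = 0) :
    condMutInf μ X Y (fun ω => fun i => M i ω) ≤ mutInf μ X Y := by
  have key : ∀ k (hk : k ≤ n),
      condMutInf μ X Y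
        (fun ω => fun j : Fin k => M ⟨j.val, lt_of_lt_of_le j.isLt hk⟩ ω) ≤ mutInf μ X Y := by
    intro k
    induction k with
    | zero =>
      intro hk
      rw [condMutInf_of_unique]
    | succ k ih =>
      intro hk1
      have hkn : k < n := Nat.lt_of_lt_of_le (Nat.lt_succ_self k) hk1
      have hk : k ≤ n := le_of_lt hkn
      set i : Fin n := ⟨k, hkn⟩ with hi
      set Tk : Ω → ∀ j : Fin k, A ⟨j.val, lt_of_lt_of_le j.isLt hk⟩ :=
        fun ω => fun j : Fin k => M ⟨j.val, lt_of_lt_of_le j.isLt hk⟩ ω with hTk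
      set Tk1 : Ω → ∀ j : Fin (k + 1), A ⟨j.val, lt_of_lt_of_le j.isLt hk1⟩ :=
        fun ω => fun j : Fin (k + 1) => M ⟨j.val, lt_of_lt_of_le j.isLt hk1⟩ ω with hTk1
      let g : (∀ j : Fin (k + 1), A ⟨j.val, lt_of_lt_of_le j.isLt hk1⟩) →
          A i × (∀ j : Fin k, A ⟨j.val, lt_of_lt_of_le j.isLt hk⟩) :=
        fun v => (v ⟨k, Nat.lt_succ_self k⟩, fun j => v ⟨j.val, Nat.lt_succ_of_lt j.isLt⟩)
      have hg : Function.Injective g := by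
        intro v w h
        have h1 := congrArg Prod.fst h
        have h2 := congrArg Prod.snd h
        funext j
        rcases Nat.lt_or_ge j.val k with hj | hj
        · exact congrFun h2 ⟨j.val, hj⟩
        · have hjk : j = ⟨k, Nat.lt_succ_self k⟩ :=
            Fin.ext (Nat.le_antisymm (Nat.lt_succ_iff.mp j.isLt) hj)
          rw [hjk]
          exact h1
      have hrel : condMutInf μ X Y (fun ω => (M i ω, Tk ω)) = condMutInf μ X Y Tk1 :=
        condMutInf_comp_inj' μ X Y Tk1 hg (fun ω => (M i ω, Tk ω)) (fun ω => rfl)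
      have hTkmeas : Measurable Tk := measurable_pi_lambda _ (fun j => hM _)
      rcases Nat.even_or_odd k with hev | hod
      · have h0 : condMutInf μ (M i) Y (fun ω => (X ω, Tk ω)) = 0 := hAlice i hev
        have hstep := step_lemma μ X Y Tk (M i) hX hY hTkmeas (hM i) h0
        calc condMutInf μ X Y Tk1
            = condMutInf μ X Y (fun ω => (M i ω, Tk ω)) := hrel.symm
          _ ≤ condMutInf μ X Y Tk := hstep
          _ ≤ mutInf μ X Y := ih hk
      · have h0 : condMutInf μ (M i) X (fun ω => (Y ω, Tk ω)) = 0 := hBob i hod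
        have hstep := step_lemma μ Y X Tk (M i) hY hX hTkmeas (hM i) h0
        calc condMutInf μ X Y Tk1
            = condMutInf μ X Y (fun ω => (M i ω, Tk ω)) := hrel.symm
          _ = condMutInf μ Y X (fun ω => (M i ω, Tk ω)) := condMutInf_comm μ X Y _
          _ ≤ condMutInf μ Y X Tk := hstep
          _ = condMutInf μ X Y Tk := (condMutInf_comm μ X Y Tk).symm
          _ ≤ mutInf μ X Y := ih hk
  exact key n le_rfl
end

section
/- Let X, Y, Z, M be random variables on a common probability space, each taking values in a finite set, with I(X ; Y) = 0, I(X ; Y | M) = 0, H(Z | (M, X)) = 0 and H(Z | (M, Y)) = 0. Then there exists a finite-valued random variable Q on the same probability space satisfying I((X, Z) ; (Y, Z) | Q) = 0 and I(X ; M | Y) + I(Y ; M | X) ≥ I(X ; Z | Y) + I(Y ; Z | X) + I((X, Z) ; Q | (Y, Z)) + I((Y, Z) ; Q | (X, Z)). (In particular, the information cost of any protocol computing Z from independent inputs is at least I(X;Z|Y) + I(Y;Z|X) plus the Wyner tension T_Wyn(XZ; YZ), which is the infimum of I((X,Z);Q|(Y,Z)) + I((Y,Z);Q|(X,Z)) over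 all Q making (X,Z) and (Y,Z) conditionally independent given Q.) -/
open MeasureTheory ProbabilityTheory Real
open scoped ENNReal

/-- A finite-valued random variable on `Ω`, bundled with its finite alphabet
(whose singletons are measurable). -/
structure FinRV (Ω : Type*) [MeasurableSpace Ω] where
  T : Type
  fin : Fintype T
  meas : MeasurableSpace T
  msc : @MeasurableSingletonClass T meas
  f : Ω → T
  hf : @Measurable Ω T _ meas f

attribute [instance] FinRV.fin FinRV.meas FinRV.msc


section WynerHelpers

open Finset

variable {Ω : Type*} [MeasurableSpace Ω]

private lemma wyner_entH_comp_inj {S S' : Type*} [Fintype S] [Fintype S'] (μ : Measure Ω)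
    (φ : S → S') (hφ : Function.Injective φ) (V : Ω → S) :
    entH μ (fun ω => φ (V ω)) = entH μ V := by
  classical
  unfold entH
  have h0 : ∀ y ∈ Finset.univ, y ∉ Finset.univ.image φ →
      Real.negMulLog (pm μ (fun ω => φ (V ω)) y) = 0 := by
    intro y _ hy
    have : ((fun ω => φ (V ω)) ⁻¹' {y}) = ∅ := by
      ext ω
      simp only [Set.mem_preimage, Set.mem_singleton_iff, Set.mem_empty_iff_false, iff_false]
      intro h
      exact hy (Finset.mem_image.2 ⟨V ω, Finset.mem_univ _, h⟩)
    simp [pm, this]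
  rw [← Finset.sum_subset (Finset.subset_univ (Finset.univ.image φ)) h0,
    Finset.sum_image (fun x _ y _ h => hφ h)]
  refine Finset.sum_congr rfl fun x _ => ?_
  have : ((fun ω => φ (V ω)) ⁻¹' {φ x}) = V ⁻¹' {x} := by
    ext ω; simp [hφ.eq_iff]
  rw [pm, pm, this]

private lemma wyner_sum_meas_inter (μ : Measure Ω) [IsFiniteMeasure μ] {T : Type*} [Fintype T]
    [MeasurableSpace T] [MeasurableSingletonClass T]
    (E : Set Ω) (hE : MeasurableSet E) (W : Ω → T) (hW : Measurable W) :
    ∑ t : T, (μ (E ∩ W ⁻¹' {t})).toReal = (μ E).toReal := by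
  classical
  rw [← ENNReal.toReal_sum (fun t _ => measure_ne_top μ _)]
  congr 1
  have hcover : E = ⋃ t ∈ (Finset.univ : Finset T), E ∩ W ⁻¹' {t} := by
    ext ω; simp
  have key : (∑ t : T, μ (E ∩ W ⁻¹' {t})) = μ E := by
    conv_rhs => rw [hcover]
    rw [measure_biUnion_finset]
    · intro i _ j _ hij
      refine Set.disjoint_left.2 ?_
      rintro ω ⟨_, hi⟩ ⟨_, hj⟩
      exact hij (by simp only [Set.mem_preimage, Set.mem_singleton_iff] at hi hj; rw [← hi, ← hj])
    · exact fun t _ => hE.inter (hW (measurableSet_singleton t))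
  rw [key]

private lemma wyner_sum_rot {S T U : Type*} [Fintype S] [Fintype T] [Fintype U]
    (F : S → T → U → ℝ) : (∑ a, ∑ b, ∑ c, F a b c) = ∑ c, ∑ a, ∑ b, F a b c :=
  calc (∑ a, ∑ b, ∑ c, F a b c) = ∑ a, ∑ c, ∑ b, F a b c :=
        Finset.sum_congr rfl fun a _ => Finset.sum_comm
    _ = ∑ c, ∑ a, ∑ b, F a b c := Finset.sum_comm

private lemma wyner_combine3 {S T U : Type*} [Fintype S] [Fintype T] [Fintype U]
    (F G H K : S → T → U → ℝ) :
    (∑ a, ∑ b, ∑ c, F a b c) + (∑ a, ∑ b, ∑ c, G a b c)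
      - (∑ a, ∑ b, ∑ c, H a b c) - (∑ a, ∑ b, ∑ c, K a b c)
    = ∑ a, ∑ b, ∑ c, (F a b c + G a b c - H a b c - K a b c) := by
  simp [Finset.sum_add_distrib, Finset.sum_sub_distrib]

private lemma wyner_cmiF_nonneg {S T U : Type*} [Fintype S] [Fintype T] [Fintype U]
    (q : S → T → U → ℝ) (hq0 : ∀ a b c, 0 ≤ q a b c) :
    0 ≤ (∑ a, ∑ c, negMulLog (∑ b, q a b c)) + (∑ b, ∑ c, negMulLog (∑ a, q a b c))
      - (∑ a, ∑ b, ∑ c, negMulLog (q a b c)) - (∑ c, negMulLog (∑ a, ∑ b, q a b c)) := by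
  classical
  have hf0 : ∀ a c, 0 ≤ ∑ b, q a b c := fun a c => Finset.sum_nonneg fun b _ => hq0 a b c
  have hg0 : ∀ b c, 0 ≤ ∑ a, q a b c := fun b c => Finset.sum_nonneg fun a _ => hq0 a b c
  have hm0 : ∀ c, 0 ≤ ∑ a, ∑ b, q a b c := fun c => Finset.sum_nonneg fun a _ => hf0 a c
  have S1 : (∑ a, ∑ c, negMulLog (∑ b, q a b c))
      = ∑ a, ∑ b, ∑ c, (-(q a b c * log (∑ b', q a b' c))) := by
    refine Finset.sum_congr rfl fun a _ => ?_
    calc (∑ c, negMulLog (∑ b, q a b c))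
        = ∑ c, ∑ b, (-(q a b c * log (∑ b', q a b' c))) := by
          refine Finset.sum_congr rfl fun c _ => ?_
          rw [negMulLog, neg_mul, Finset.sum_mul, ← Finset.sum_neg_distrib]
      _ = ∑ b, ∑ c, (-(q a b c * log (∑ b', q a b' c))) := Finset.sum_comm
  have S2 : (∑ b, ∑ c, negMulLog (∑ a, q a b c))
      = ∑ a, ∑ b, ∑ c, (-(q a b c * log (∑ a', q a' b c))) := by
    calc (∑ b, ∑ c, negMulLog (∑ a, q a b c))
        = ∑ b, ∑ c, ∑ a, (-(q a b c * log (∑ a', q a' b c))) := by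
          refine Finset.sum_congr rfl fun b _ => Finset.sum_congr rfl fun c _ => ?_
          rw [negMulLog, neg_mul, Finset.sum_mul, ← Finset.sum_neg_distrib]
      _ = ∑ b, ∑ a, ∑ c, (-(q a b c * log (∑ a', q a' b c))) :=
          Finset.sum_congr rfl fun b _ => Finset.sum_comm
      _ = ∑ a, ∑ b, ∑ c, (-(q a b c * log (∑ a', q a' b c))) := Finset.sum_comm
  have S3 : (∑ c, negMulLog (∑ a, ∑ b, q a b c))
      = ∑ a, ∑ b, ∑ c, (-(q a b c * log (∑ a', ∑ b', q a' b' c))) := by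
    calc (∑ c, negMulLog (∑ a, ∑ b, q a b c))
        = ∑ c, ∑ a, ∑ b, (-(q a b c * log (∑ a', ∑ b', q a' b' c))) := by
          refine Finset.sum_congr rfl fun c _ => ?_
          rw [negMulLog, neg_mul, Finset.sum_mul, ← Finset.sum_neg_distrib]
          exact Finset.sum_congr rfl fun a _ => by
            rw [Finset.sum_mul, ← Finset.sum_neg_distrib]
      _ = ∑ a, ∑ b, ∑ c, (-(q a b c * log (∑ a', ∑ b', q a' b' c))) := (wyner_sum_rot _).symm
  rw [S1, S2, S3, wyner_combine3]
  have key : ∀ a b c, q a b c - (∑ b', q a b' c) * (∑ a', q a' b c) / (∑ a', ∑ b', q a' b' c)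
      ≤ -(q a b c * log (∑ b', q a b' c)) + -(q a b c * log (∑ a', q a' b c))
        - negMulLog (q a b c) - -(q a b c * log (∑ a', ∑ b', q a' b' c)) := by
    intro a b c
    set F := ∑ b', q a b' c with hF
    set G := ∑ a', q a' b c with hG
    set Mc := ∑ a', ∑ b', q a' b' c with hM
    rcases eq_or_lt_of_le (hq0 a b c) with hq | hq
    · rw [← hq]
      simp only [zero_sub, zero_mul, neg_zero, negMulLog_zero, add_zero, sub_zero,
        zero_add, sub_self]
      have : 0 ≤ F * G / Mc := div_nonneg (mul_nonneg (hf0 a c) (hg0 b c)) (hm0 c)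
      linarith
    · have hfq : q a b c ≤ F := Finset.single_le_sum (fun b _ => hq0 a b c) (mem_univ b)
      have hgq : q a b c ≤ G := Finset.single_le_sum (fun a _ => hq0 a b c) (mem_univ a)
      have hmf : F ≤ Mc := Finset.single_le_sum (fun a _ => hf0 a c) (mem_univ a)
      have hfpos : 0 < F := lt_of_lt_of_le hq hfq
      have hgpos : 0 < G := lt_of_lt_of_le hq hgq
      have hmpos : 0 < Mc := lt_of_lt_of_le hfpos hmf
      have hXpos : 0 < F * G / (q a b c * Mc) := by positivity
      have hlog := Real.log_le_sub_one_of_pos hXpos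
      have h1 : q a b c * log (F * G / (q a b c * Mc))
          ≤ q a b c * (F * G / (q a b c * Mc) - 1) :=
        mul_le_mul_of_nonneg_left hlog hq.le
      have h2 : log (F * G / (q a b c * Mc))
          = log F + log G - log (q a b c) - log Mc := by
        rw [Real.log_div (by positivity) (by positivity),
          Real.log_mul hfpos.ne' hgpos.ne', Real.log_mul hq.ne' hmpos.ne']
        ring
      have h3 : q a b c * (F * G / (q a b c * Mc) - 1) = F * G / Mc - q a b c := by
        field_simp
      rw [negMulLog]
      rw [h2, h3] at h1
      nlinarith [h1]
  have lower := Finset.sum_le_sum (fun a (_ : a ∈ univ) =>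
    Finset.sum_le_sum (fun b (_ : b ∈ univ) =>
      Finset.sum_le_sum (fun c (_ : c ∈ univ) => key a b c)))
  have lhs_eval : (∑ a, ∑ b, ∑ c,
      (q a b c - (∑ b', q a b' c) * (∑ a', q a' b c) / (∑ a', ∑ b', q a' b' c))) = 0 := by
    rw [wyner_sum_rot]
    have percF : ∀ c, (∑ a, ∑ b,
        (q a b c - (∑ b', q a b' c) * (∑ a', q a' b c) / (∑ a', ∑ b', q a' b' c)))
        = (∑ a, ∑ b, q a b c) - (∑ a', ∑ b', q a' b' c) *
            ((∑ a', ∑ b', q a' b' c) / (∑ a', ∑ b', q a' b' c)) := by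
      intro c
      have e1 : (∑ a, ∑ b,
          (q a b c - (∑ b', q a b' c) * (∑ a', q a' b c) / (∑ a', ∑ b', q a' b' c)))
          = (∑ a, ∑ b, q a b c)
            - ∑ a, ∑ b, ((∑ b', q a b' c) * ((∑ a', q a' b c) / (∑ a', ∑ b', q a' b' c))) := by
        rw [← Finset.sum_sub_distrib]
        refine Finset.sum_congr rfl fun a _ => ?_
        rw [← Finset.sum_sub_distrib]
        exact Finset.sum_congr rfl fun b _ => by rw [mul_div_assoc]
      rw [e1]
      congr 1
      have inner : ∀ a, (∑ b, ((∑ b', q a b' c) * ((∑ a', q a' b c) / (∑ a', ∑ b', q a' b' c))))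
          = (∑ b', q a b' c) * ((∑ a', ∑ b', q a' b' c) / (∑ a', ∑ b', q a' b' c)) := by
        intro a
        rw [← Finset.mul_sum, ← Finset.sum_div]
        congr 2
        exact Finset.sum_comm
      rw [Finset.sum_congr rfl fun a _ => inner a, ← Finset.sum_mul]
    rw [Finset.sum_congr rfl fun c _ => percF c, Finset.sum_sub_distrib]
    have e3 : (∑ c, (∑ a', ∑ b', q a' b' c) *
        ((∑ a', ∑ b', q a' b' c) / (∑ a', ∑ b', q a' b' c))) = ∑ c, ∑ a, ∑ b, q a b c := by
      refine Finset.sum_congr rfl fun c _ => ?_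
      rcases eq_or_lt_of_le (hm0 c) with h | h
      · rw [← h]; simp
      · rw [div_self h.ne', mul_one]
    rw [e3]
    simp
  linarith [lower, lhs_eval.le]

theorem condMutInf_nonneg_s5 (μ : Measure Ω) [IsProbabilityMeasure μ]
    {S T U : Type*} [Fintype S] [Fintype T] [Fintype U]
    [MeasurableSpace S] [MeasurableSingletonClass S]
    [MeasurableSpace T] [MeasurableSingletonClass T]
    [MeasurableSpace U] [MeasurableSingletonClass U]
    (A : Ω → S) (B : Ω → T) (C : Ω → U)
    (hA : Measurable A) (hB : Measurable B) (hC : Measurable C) :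
    0 ≤ condMutInf μ A B C := by
  classical
  have hq0 : ∀ (a : S) (b : T) (c : U),
      0 ≤ pm μ (fun ω => ((A ω, B ω), C ω)) ((a, b), c) :=
    fun _ _ _ => ENNReal.toReal_nonneg
  have hf : ∀ (a : S) (c : U), pm μ (fun ω => (A ω, C ω)) (a, c)
      = ∑ b, pm μ (fun ω => ((A ω, B ω), C ω)) ((a, b), c) := by
    intro a c
    have hset : ∀ b : T, ((fun ω => ((A ω, B ω), C ω)) ⁻¹' {((a, b), c)})
        = (A ⁻¹' {a} ∩ C ⁻¹' {c}) ∩ B ⁻¹' {b} := by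
      intro b; ext ω; simp [Prod.ext_iff]; tauto
    have hE : MeasurableSet (A ⁻¹' {a} ∩ C ⁻¹' {c}) :=
      (hA (measurableSet_singleton a)).inter (hC (measurableSet_singleton c))
    have := wyner_sum_meas_inter μ (A ⁻¹' {a} ∩ C ⁻¹' {c}) hE B hB
    simp only [pm, hset]
    rw [this]
    have hset2 : ((fun ω => (A ω, C ω)) ⁻¹' {(a, c)}) = A ⁻¹' {a} ∩ C ⁻¹' {c} := by
      ext ω; simp [Prod.ext_iff]
    rw [hset2]
  have hg : ∀ (b : T) (c : U), pm μ (fun ω => (B ω, C ω)) (b, c)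
      = ∑ a, pm μ (fun ω => ((A ω, B ω), C ω)) ((a, b), c) := by
    intro b c
    have hset : ∀ a : S, ((fun ω => ((A ω, B ω), C ω)) ⁻¹' {((a, b), c)})
        = (B ⁻¹' {b} ∩ C ⁻¹' {c}) ∩ A ⁻¹' {a} := by
      intro a; ext ω; simp [Prod.ext_iff]; tauto
    have hE : MeasurableSet (B ⁻¹' {b} ∩ C ⁻¹' {c}) :=
      (hB (measurableSet_singleton b)).inter (hC (measurableSet_singleton c))
    have := wyner_sum_meas_inter μ (B ⁻¹' {b} ∩ C ⁻¹' {c}) hE A hA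
    simp only [pm, hset]
    rw [this]
    have hset2 : ((fun ω => (B ω, C ω)) ⁻¹' {(b, c)}) = B ⁻¹' {b} ∩ C ⁻¹' {c} := by
      ext ω; simp [Prod.ext_iff]
    rw [hset2]
  have hh : ∀ c : U, pm μ C c = ∑ a, ∑ b, pm μ (fun ω => ((A ω, B ω), C ω)) ((a, b), c) := by
    intro c
    have hstep : ∀ a : S, (∑ b, pm μ (fun ω => ((A ω, B ω), C ω)) ((a, b), c))
        = (μ (C ⁻¹' {c} ∩ A ⁻¹' {a})).toReal := by
      intro a
      have hset : ∀ b : T, ((fun ω => ((A ω, B ω), C ω)) ⁻¹' {((a, b), c)})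
          = (C ⁻¹' {c} ∩ A ⁻¹' {a}) ∩ B ⁻¹' {b} := by
        intro b; ext ω; simp [Prod.ext_iff]; tauto
      have hE : MeasurableSet (C ⁻¹' {c} ∩ A ⁻¹' {a}) :=
        (hC (measurableSet_singleton c)).inter (hA (measurableSet_singleton a))
      have := wyner_sum_meas_inter μ (C ⁻¹' {c} ∩ A ⁻¹' {a}) hE B hB
      simp only [pm, hset]
      rw [this]
    rw [Finset.sum_congr rfl fun a _ => hstep a]
    have := wyner_sum_meas_inter μ (C ⁻¹' {c}) (hC (measurableSet_singleton c)) A hA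
    rw [this]
    rfl
  have main := wyner_cmiF_nonneg (fun a b c => pm μ (fun ω => ((A ω, B ω), C ω)) ((a, b), c)) hq0
  unfold condMutInf entH
  have e1 : (∑ x : S × U, negMulLog (pm μ (fun ω => (A ω, C ω)) x))
      = ∑ a, ∑ c, negMulLog (∑ b, pm μ (fun ω => ((A ω, B ω), C ω)) ((a, b), c)) := by
    rw [Fintype.sum_prod_type]
    exact Finset.sum_congr rfl fun a _ => Finset.sum_congr rfl fun c _ => by rw [hf]
  have e2 : (∑ x : T × U, negMulLog (pm μ (fun ω => (B ω, C ω)) x))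
      = ∑ b, ∑ c, negMulLog (∑ a, pm μ (fun ω => ((A ω, B ω), C ω)) ((a, b), c)) := by
    rw [Fintype.sum_prod_type]
    exact Finset.sum_congr rfl fun b _ => Finset.sum_congr rfl fun c _ => by rw [hg]
  have e3 : (∑ x : (S × T) × U, negMulLog (pm μ (fun ω => ((A ω, B ω), C ω)) x))
      = ∑ a, ∑ b, ∑ c, negMulLog (pm μ (fun ω => ((A ω, B ω), C ω)) ((a, b), c)) := by
    rw [Fintype.sum_prod_type, Fintype.sum_prod_type]
  have e4 : (∑ c : U, negMulLog (pm μ C c))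
      = ∑ c, negMulLog (∑ a, ∑ b, pm μ (fun ω => ((A ω, B ω), C ω)) ((a, b), c)) :=
    Finset.sum_congr rfl fun c _ => by rw [hh]
  rw [e1, e2, e3, e4]
  exact main

end WynerHelpers

set_option maxHeartbeats 2000000 in
/-- For independent inputs, the information cost of any protocol computing `Z` is at least
`I(X;Z|Y) + I(Y;Z|X)` plus the Wyner tension of `(X,Z)` and `(Y,Z)`: there is a finite-valued
`Q` making `(X,Z)` and `(Y,Z)` conditionally independent with
`I(X;M|Y) + I(Y;M|X) ≥ I(X;Z|Y) + I(Y;Z|X) + I((X,Z);Q|(Y,Z)) + I((Y,Z);Q|(X,Z))`. -/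
theorem information_cost_ge_wyner_tension
    {Ω : Type*} [MeasurableSpace Ω] (μ : Measure Ω) [IsProbabilityMeasure μ]
    {S T W U : Type*} [Fintype S] [Fintype T] [Fintype W] [Fintype U]
    [MeasurableSpace S] [MeasurableSingletonClass S]
    [MeasurableSpace T] [MeasurableSingletonClass T]
    [MeasurableSpace W] [MeasurableSingletonClass W]
    [MeasurableSpace U] [MeasurableSingletonClass U]
    (X : Ω → S) (Y : Ω → T) (Z : Ω → W) (M : Ω → U)
    (hX : Measurable X) (hY : Measurable Y) (hZ : Measurable Z) (hM : Measurable M)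
    (hindep : mutInf μ X Y = 0)
    (hXY : condMutInf μ X Y M = 0)
    (hZX : condEnt μ Z (fun ω => (M ω, X ω)) = 0)
    (hZY : condEnt μ Z (fun ω => (M ω, Y ω)) = 0) :
    ∃ Q : FinRV Ω,
      condMutInf μ (fun ω => (X ω, Z ω)) (fun ω => (Y ω, Z ω)) Q.f = 0 ∧
      condMutInf μ X M Y + condMutInf μ Y M X
        ≥ condMutInf μ X Z Y + condMutInf μ Y Z X
          + condMutInf μ (fun ω => (X ω, Z ω)) Q.f (fun ω => (Y ω, Z ω))
          + condMutInf μ (fun ω => (Y ω, Z ω)) Q.f (fun ω => (X ω, Z ω)) := by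
  classical
  have hQmeas : Measurable (fun ω => (Fintype.equivFin (U × W)) (M ω, Z ω)) :=
    (measurable_of_countable _).comp (hM.prodMk hZ)
  -- restated hypotheses
  have hXY' : entH μ (fun ω => (X ω, M ω)) + entH μ (fun ω => (Y ω, M ω))
      - entH μ (fun ω => ((X ω, Y ω), M ω)) - entH μ M = 0 := hXY
  have hZX' : entH μ (fun ω => (Z ω, (M ω, X ω))) - entH μ (fun ω => (M ω, X ω)) = 0 := hZX
  have hZY' : entH μ (fun ω => (Z ω, (M ω, Y ω))) - entH μ (fun ω => (M ω, Y ω)) = 0 := hZY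
  -- reorderings of entropies via injections
  have r1 : entH μ (fun ω => (M ω, X ω)) = entH μ (fun ω => (X ω, M ω)) :=
    wyner_entH_comp_inj μ (fun p : S × U => (p.2, p.1)) (by intro p q h; simp only [Prod.mk.injEq, EmbeddingLike.apply_eq_iff_eq] at h; simp only [Prod.ext_iff]; tauto) (fun ω => (X ω, M ω))
  have r2 : entH μ (fun ω => (M ω, Y ω)) = entH μ (fun ω => (Y ω, M ω)) :=
    wyner_entH_comp_inj μ (fun p : T × U => (p.2, p.1)) (by intro p q h; simp only [Prod.mk.injEq, EmbeddingLike.apply_eq_iff_eq] at h; simp only [Prod.ext_iff]; tauto) (fun ω => (Y ω, M ω))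
  have k10 : entH μ (fun ω => (Y ω, (X ω, M ω))) = entH μ (fun ω => ((X ω, Y ω), M ω)) :=
    wyner_entH_comp_inj μ (fun p : (S × T) × U => (p.1.2, (p.1.1, p.2))) (by intro p q h; simp only [Prod.mk.injEq, EmbeddingLike.apply_eq_iff_eq] at h; simp only [Prod.ext_iff]; tauto)
      (fun ω => ((X ω, Y ω), M ω))
  have k7 : entH μ (fun ω => (Z ω, (X ω, M ω))) = entH μ (fun ω => (Z ω, (M ω, X ω))) :=
    wyner_entH_comp_inj μ (fun p : W × (U × S) => (p.1, (p.2.2, p.2.1))) (by intro p q h; simp only [Prod.mk.injEq, EmbeddingLike.apply_eq_iff_eq] at h; simp only [Prod.ext_iff]; tauto)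
      (fun ω => (Z ω, (M ω, X ω)))
  have n3' : 0 ≤ entH μ (fun ω => (Y ω, (X ω, M ω))) + entH μ (fun ω => (Z ω, (X ω, M ω)))
      - entH μ (fun ω => ((Y ω, Z ω), (X ω, M ω))) - entH μ (fun ω => (X ω, M ω)) :=
    condMutInf_nonneg_s5 μ Y Z (fun ω => (X ω, M ω)) hY hZ (hX.prodMk hM)
  have k9 : entH μ (fun ω => (Z ω, (Y ω, (X ω, M ω))))
      = entH μ (fun ω => ((Y ω, Z ω), (X ω, M ω))) :=
    wyner_entH_comp_inj μ (fun p : (T × W) × (S × U) => (p.1.2, (p.1.1, p.2))) (by intro p q h; simp only [Prod.mk.injEq, EmbeddingLike.apply_eq_iff_eq] at h; simp only [Prod.ext_iff]; tauto)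
      (fun ω => ((Y ω, Z ω), (X ω, M ω)))
  have n4' : 0 ≤ entH μ (fun ω => (Z ω, (Y ω, (X ω, M ω))))
      + entH μ (fun ω => (Z ω, (Y ω, (X ω, M ω))))
      - entH μ (fun ω => ((Z ω, Z ω), (Y ω, (X ω, M ω))))
      - entH μ (fun ω => (Y ω, (X ω, M ω))) :=
    condMutInf_nonneg_s5 μ Z Z (fun ω => (Y ω, (X ω, M ω))) hZ hZ
      (hY.prodMk (hX.prodMk hM))
  have k11 : entH μ (fun ω => ((Z ω, Z ω), (Y ω, (X ω, M ω))))
      = entH μ (fun ω => (Z ω, (Y ω, (X ω, M ω)))) :=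
    wyner_entH_comp_inj μ (fun p : W × (T × (S × U)) => ((p.1, p.1), p.2)) (by intro p q h; simp only [Prod.mk.injEq, EmbeddingLike.apply_eq_iff_eq] at h; simp only [Prod.ext_iff]; tauto)
      (fun ω => (Z ω, (Y ω, (X ω, M ω))))
  have F4 : entH μ (fun ω => ((Y ω, Z ω), (X ω, M ω)))
      = entH μ (fun ω => ((X ω, Y ω), M ω)) := by
    linarith [n3', n4', k9, k11, k7, hZX', r1, k10]
  -- E1 : H(Z,M) = H(M)
  have p1' : 0 ≤ entH μ (fun ω => (X ω, (M ω, Z ω)))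
      + entH μ (fun ω => ((Y ω, Z ω), (M ω, Z ω)))
      - entH μ (fun ω => ((X ω, (Y ω, Z ω)), (M ω, Z ω)))
      - entH μ (fun ω => (M ω, Z ω)) :=
    condMutInf_nonneg_s5 μ X (fun ω => (Y ω, Z ω)) (fun ω => (M ω, Z ω)) hX
      (hY.prodMk hZ) (hM.prodMk hZ)
  have k2 : entH μ (fun ω => (X ω, (M ω, Z ω))) = entH μ (fun ω => (Z ω, (M ω, X ω))) :=
    wyner_entH_comp_inj μ (fun p : W × (U × S) => (p.2.2, (p.2.1, p.1))) (by intro p q h; simp only [Prod.mk.injEq, EmbeddingLike.apply_eq_iff_eq] at h; simp only [Prod.ext_iff]; tauto)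
      (fun ω => (Z ω, (M ω, X ω)))
  have k3 : entH μ (fun ω => ((Y ω, Z ω), (M ω, Z ω)))
      = entH μ (fun ω => (Z ω, (M ω, Y ω))) :=
    wyner_entH_comp_inj μ (fun p : W × (U × T) => ((p.2.2, p.1), (p.2.1, p.1))) (by intro p q h; simp only [Prod.mk.injEq, EmbeddingLike.apply_eq_iff_eq] at h; simp only [Prod.ext_iff]; tauto)
      (fun ω => (Z ω, (M ω, Y ω)))
  have k4 : entH μ (fun ω => ((X ω, (Y ω, Z ω)), (M ω, Z ω)))
      = entH μ (fun ω => ((Y ω, Z ω), (X ω, M ω))) :=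
    wyner_entH_comp_inj μ (fun p : (T × W) × (S × U) => ((p.2.1, p.1), (p.2.2, p.1.2))) (by intro p q h; simp only [Prod.mk.injEq, EmbeddingLike.apply_eq_iff_eq] at h; simp only [Prod.ext_iff]; tauto)
      (fun ω => ((Y ω, Z ω), (X ω, M ω)))
  have k5 : entH μ (fun ω => (M ω, Z ω)) = entH μ (fun ω => (Z ω, M ω)) :=
    wyner_entH_comp_inj μ (fun p : W × U => (p.2, p.1)) (by intro p q h; simp only [Prod.mk.injEq, EmbeddingLike.apply_eq_iff_eq] at h; simp only [Prod.ext_iff]; tauto) (fun ω => (Z ω, M ω))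
  have p2' : 0 ≤ entH μ (fun ω => (Z ω, M ω)) + entH μ (fun ω => (Z ω, M ω))
      - entH μ (fun ω => ((Z ω, Z ω), M ω)) - entH μ M :=
    condMutInf_nonneg_s5 μ Z Z M hZ hZ hM
  have k6 : entH μ (fun ω => ((Z ω, Z ω), M ω)) = entH μ (fun ω => (Z ω, M ω)) :=
    wyner_entH_comp_inj μ (fun p : W × U => ((p.1, p.1), p.2)) (by intro p q h; simp only [Prod.mk.injEq, EmbeddingLike.apply_eq_iff_eq] at h; simp only [Prod.ext_iff]; tauto) (fun ω => (Z ω, M ω))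
  have E1 : entH μ (fun ω => (Z ω, M ω)) = entH μ M := by
    linarith [p1', k2, k3, k4, k5, p2', k6, hZX', hZY', hXY', r1, r2, F4]
  -- entropies involving Q
  have j1 : entH μ (fun ω => ((X ω, Z ω), (Fintype.equivFin (U × W)) (M ω, Z ω)))
      = entH μ (fun ω => (Z ω, (M ω, X ω))) :=
    wyner_entH_comp_inj μ (fun p : W × (U × S) => ((p.2.2, p.1), (Fintype.equivFin (U × W)) (p.2.1, p.1))) (by intro p q h; simp only [Prod.mk.injEq, EmbeddingLike.apply_eq_iff_eq] at h; simp only [Prod.ext_iff]; tauto)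
      (fun ω => (Z ω, (M ω, X ω)))
  have j2 : entH μ (fun ω => ((Y ω, Z ω), (Fintype.equivFin (U × W)) (M ω, Z ω)))
      = entH μ (fun ω => (Z ω, (M ω, Y ω))) :=
    wyner_entH_comp_inj μ (fun p : W × (U × T) => ((p.2.2, p.1), (Fintype.equivFin (U × W)) (p.2.1, p.1))) (by intro p q h; simp only [Prod.mk.injEq, EmbeddingLike.apply_eq_iff_eq] at h; simp only [Prod.ext_iff]; tauto)
      (fun ω => (Z ω, (M ω, Y ω)))
  have j3 : entH μ (fun ω => (((X ω, Z ω), (Y ω, Z ω)), (Fintype.equivFin (U × W)) (M ω, Z ω)))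
      = entH μ (fun ω => ((Y ω, Z ω), (X ω, M ω))) :=
    wyner_entH_comp_inj μ
      (fun p : (T × W) × (S × U) => (((p.2.1, p.1.2), (p.1.1, p.1.2)), (Fintype.equivFin (U × W)) (p.2.2, p.1.2))) (by intro p q h; simp only [Prod.mk.injEq, EmbeddingLike.apply_eq_iff_eq] at h; simp only [Prod.ext_iff]; tauto)
      (fun ω => ((Y ω, Z ω), (X ω, M ω)))
  have j4 : entH μ (fun ω => (Fintype.equivFin (U × W)) (M ω, Z ω)) = entH μ (fun ω => (Z ω, M ω)) :=
    wyner_entH_comp_inj μ (fun p : W × U => (Fintype.equivFin (U × W)) (p.2, p.1)) (by intro p q h; simp only [Prod.mk.injEq, EmbeddingLike.apply_eq_iff_eq] at h; simp only [Prod.ext_iff]; tauto) (fun ω => (Z ω, M ω))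
  have g1 : entH μ (fun ω => ((X ω, Z ω), (Y ω, Z ω)))
      = entH μ (fun ω => ((X ω, Z ω), Y ω)) :=
    wyner_entH_comp_inj μ (fun p : (S × W) × T => (p.1, (p.2, p.1.2))) (by intro p q h; simp only [Prod.mk.injEq, EmbeddingLike.apply_eq_iff_eq] at h; simp only [Prod.ext_iff]; tauto)
      (fun ω => ((X ω, Z ω), Y ω))
  have g2 : entH μ (fun ω => ((Fintype.equivFin (U × W)) (M ω, Z ω), (Y ω, Z ω)))
      = entH μ (fun ω => (Z ω, (M ω, Y ω))) :=
    wyner_entH_comp_inj μ (fun p : W × (U × T) => ((Fintype.equivFin (U × W)) (p.2.1, p.1), (p.2.2, p.1))) (by intro p q h; simp only [Prod.mk.injEq, EmbeddingLike.apply_eq_iff_eq] at h; simp only [Prod.ext_iff]; tauto)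
      (fun ω => (Z ω, (M ω, Y ω)))
  have g3 : entH μ (fun ω => (((X ω, Z ω), (Fintype.equivFin (U × W)) (M ω, Z ω)), (Y ω, Z ω)))
      = entH μ (fun ω => ((Y ω, Z ω), (X ω, M ω))) :=
    wyner_entH_comp_inj μ
      (fun p : (T × W) × (S × U) => (((p.2.1, p.1.2), (Fintype.equivFin (U × W)) (p.2.2, p.1.2)), (p.1.1, p.1.2))) (by intro p q h; simp only [Prod.mk.injEq, EmbeddingLike.apply_eq_iff_eq] at h; simp only [Prod.ext_iff]; tauto)
      (fun ω => ((Y ω, Z ω), (X ω, M ω)))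
  have g4 : entH μ (fun ω => ((Y ω, Z ω), (X ω, Z ω)))
      = entH μ (fun ω => ((Y ω, Z ω), X ω)) :=
    wyner_entH_comp_inj μ (fun p : (T × W) × S => (p.1, (p.2, p.1.2))) (by intro p q h; simp only [Prod.mk.injEq, EmbeddingLike.apply_eq_iff_eq] at h; simp only [Prod.ext_iff]; tauto)
      (fun ω => ((Y ω, Z ω), X ω))
  have g5 : entH μ (fun ω => ((Fintype.equivFin (U × W)) (M ω, Z ω), (X ω, Z ω)))
      = entH μ (fun ω => (Z ω, (M ω, X ω))) :=
    wyner_entH_comp_inj μ (fun p : W × (U × S) => ((Fintype.equivFin (U × W)) (p.2.1, p.1), (p.2.2, p.1))) (by intro p q h; simp only [Prod.mk.injEq, EmbeddingLike.apply_eq_iff_eq] at h; simp only [Prod.ext_iff]; tauto)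
      (fun ω => (Z ω, (M ω, X ω)))
  have g6 : entH μ (fun ω => (((Y ω, Z ω), (Fintype.equivFin (U × W)) (M ω, Z ω)), (X ω, Z ω)))
      = entH μ (fun ω => ((Y ω, Z ω), (X ω, M ω))) :=
    wyner_entH_comp_inj μ
      (fun p : (T × W) × (S × U) => ((p.1, (Fintype.equivFin (U × W)) (p.2.2, p.1.2)), (p.2.1, p.1.2))) (by intro p q h; simp only [Prod.mk.injEq, EmbeddingLike.apply_eq_iff_eq] at h; simp only [Prod.ext_iff]; tauto)
      (fun ω => ((Y ω, Z ω), (X ω, M ω)))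
  have g7 : entH μ (fun ω => (Z ω, Y ω)) = entH μ (fun ω => (Y ω, Z ω)) :=
    wyner_entH_comp_inj μ (fun p : T × W => (p.2, p.1)) (by intro p q h; simp only [Prod.mk.injEq, EmbeddingLike.apply_eq_iff_eq] at h; simp only [Prod.ext_iff]; tauto) (fun ω => (Y ω, Z ω))
  have g8 : entH μ (fun ω => (Z ω, X ω)) = entH μ (fun ω => (X ω, Z ω)) :=
    wyner_entH_comp_inj μ (fun p : S × W => (p.2, p.1)) (by intro p q h; simp only [Prod.mk.injEq, EmbeddingLike.apply_eq_iff_eq] at h; simp only [Prod.ext_iff]; tauto) (fun ω => (X ω, Z ω))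
  have g9 : entH μ (fun ω => ((X ω, M ω), Y ω)) = entH μ (fun ω => ((X ω, Y ω), M ω)) :=
    wyner_entH_comp_inj μ (fun p : (S × T) × U => ((p.1.1, p.2), p.1.2)) (by intro p q h; simp only [Prod.mk.injEq, EmbeddingLike.apply_eq_iff_eq] at h; simp only [Prod.ext_iff]; tauto)
      (fun ω => ((X ω, Y ω), M ω))
  have g10 : entH μ (fun ω => ((Y ω, M ω), X ω)) = entH μ (fun ω => ((X ω, Y ω), M ω)) :=
    wyner_entH_comp_inj μ (fun p : (S × T) × U => ((p.1.2, p.2), p.1.1)) (by intro p q h; simp only [Prod.mk.injEq, EmbeddingLike.apply_eq_iff_eq] at h; simp only [Prod.ext_iff]; tauto)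
      (fun ω => ((X ω, Y ω), M ω))
  refine ⟨⟨Fin (Fintype.card (U × W)), inferInstance, inferInstance, inferInstance,
    fun ω => (Fintype.equivFin (U × W)) (M ω, Z ω), hQmeas⟩, ?_, ?_⟩
  · show entH μ (fun ω => ((X ω, Z ω), (Fintype.equivFin (U × W)) (M ω, Z ω)))
      + entH μ (fun ω => ((Y ω, Z ω), (Fintype.equivFin (U × W)) (M ω, Z ω)))
      - entH μ (fun ω => (((X ω, Z ω), (Y ω, Z ω)), (Fintype.equivFin (U × W)) (M ω, Z ω)))
      - entH μ (fun ω => (Fintype.equivFin (U × W)) (M ω, Z ω)) = 0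
    linarith [j1, j2, j3, j4, hZX', hZY', F4, E1, hXY', r1, r2]
  · show (entH μ (fun ω => (X ω, Y ω)) + entH μ (fun ω => (M ω, Y ω))
        - entH μ (fun ω => ((X ω, M ω), Y ω)) - entH μ Y)
      + (entH μ (fun ω => (Y ω, X ω)) + entH μ (fun ω => (M ω, X ω))
        - entH μ (fun ω => ((Y ω, M ω), X ω)) - entH μ X)
      ≥ (entH μ (fun ω => (X ω, Y ω)) + entH μ (fun ω => (Z ω, Y ω))
        - entH μ (fun ω => ((X ω, Z ω), Y ω)) - entH μ Y)
      + (entH μ (fun ω => (Y ω, X ω)) + entH μ (fun ω => (Z ω, X ω))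
        - entH μ (fun ω => ((Y ω, Z ω), X ω)) - entH μ X)
      + (entH μ (fun ω => ((X ω, Z ω), (Y ω, Z ω)))
        + entH μ (fun ω => ((Fintype.equivFin (U × W)) (M ω, Z ω), (Y ω, Z ω)))
        - entH μ (fun ω => (((X ω, Z ω), (Fintype.equivFin (U × W)) (M ω, Z ω)), (Y ω, Z ω)))
        - entH μ (fun ω => (Y ω, Z ω)))
      + (entH μ (fun ω => ((Y ω, Z ω), (X ω, Z ω)))
        + entH μ (fun ω => ((Fintype.equivFin (U × W)) (M ω, Z ω), (X ω, Z ω)))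
        - entH μ (fun ω => (((Y ω, Z ω), (Fintype.equivFin (U × W)) (M ω, Z ω)), (X ω, Z ω)))
        - entH μ (fun ω => (X ω, Z ω)))
    linarith [g1, g2, g3, g4, g5, g6, g7, g8, g9, g10, hZX', hZY', F4]
end
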